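/- Consider the permutation mechanism Pm(G,S,x). For every graph G = ([n],E) ∈ G_n, every S ⊆ [n], and every x ∈ [0,1]^S, the output vertex i^Pm(G,S,x) maximizes, over i ∈ S, the quantity δ⁻_{([n]\S) ∪ π_{<i}}(i,G), i.e., the number of incoming edges of i from vertices outside S together with vertices of S preceding i in the permutation π induced by x. -/

import Mathlib

/-- `E` has no self-loops. -/
def NoLoops {n : ℕ} (E : Finset (Fin n × Fin n)) : Prop := ∀ i, (i, i) ∉ E

/-- `δ⁻_{([n]\S) ∪ T}(i)`: the number of edges into `i` from vertices outside `S`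
or inside `T`. -/
def obsDeg {n : ℕ} (E : Finset (Fin n × Fin n)) (S T : Finset (Fin n)) (i : Fin n) : ℕ :=
  (E.filter (fun e => e.2 = i ∧ (e.1 ∉ S ∨ e.1 ∈ T))).card

/-- The ordering induced by `x`: `i` precedes `j` if `x i < x j`, or `x i = x j` and
`i ≤ j`. -/
def keyRel {n : ℕ} (x : Fin n → ℝ) (i j : Fin n) : Prop :=
  x i < x j ∨ (x i = x j ∧ i ≤ j)

noncomputable instance {n : ℕ} (x : Fin n → ℝ) : DecidableRel (keyRel x) := fun i j => by
  unfold keyRel; infer_instance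

/-- The elements of `S` listed in the order of the permutation `π(x)`. -/
noncomputable def permList {n : ℕ} (S : Finset (Fin n)) (x : Fin n → ℝ) : List (Fin n) :=
  List.insertionSort (keyRel x) S.toList

/-- One pass of the permutation mechanism: the state is the current candidate `c`, the
stored observed indegree `d`, and the set `seen` of vertices already processed. -/
def pmFold {n : ℕ} (E : Finset (Fin n × Fin n)) (S : Finset (Fin n)) :
    List (Fin n) → Fin n × ℕ × Finset (Fin n) → Fin n × ℕ × Finset (Fin n)
  | [], st => st
  | i :: rest, (c, d, seen) =>
      if d ≤ obsDeg E S (seen.erase c) i then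
        pmFold E S rest (i, obsDeg E S seen i, insert i seen)
      else
        pmFold E S rest (c, d, insert i seen)

/-- The output `i^Pm(G,S,x)` of the permutation mechanism `Pm(G,S,x)` (or `none` if `S`
is empty). -/
noncomputable def pmOut {n : ℕ} (E : Finset (Fin n × Fin n)) (S : Finset (Fin n))
    (x : Fin n → ℝ) : Option (Fin n) :=
  match permList S x with
  | [] => none
  | i :: rest => some (pmFold E S rest (i, obsDeg E S ∅ i, {i})).1

/-- `π_{<i}`: the set of vertices of `S` strictly preceding `i` in the permutation `π(x)`. -/
noncomputable def before {n : ℕ} (S : Finset (Fin n)) (x : Fin n → ℝ) (i : Fin n) : Finset (Fin n) :=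
  S.filter (fun j => x j < x i ∨ (x j = x i ∧ j < i))

/-- For every graph `G`, nonempty `S ⊆ [n]`, and `x ∈ [0,1]^S`, the output of the
permutation mechanism maximizes `δ⁻_{([n]\S) ∪ π_{<i}}(i,G)` over `i ∈ S`. -/

lemma keyRel_trans' {n : ℕ} (x : Fin n → ℝ) {a b c : Fin n}
    (h1 : keyRel x a b) (h2 : keyRel x b c) : keyRel x a c := by
  unfold keyRel at *
  rcases h1 with h1 | ⟨h1, h1'⟩ <;> rcases h2 with h2 | ⟨h2, h2'⟩
  · exact Or.inl (h1.trans h2)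
  · exact Or.inl (h2 ▸ h1)
  · exact Or.inl (h1 ▸ h2)
  · exact Or.inr ⟨h1.trans h2, h1'.trans h2'⟩

lemma keyRel_total' {n : ℕ} (x : Fin n → ℝ) (a b : Fin n) :
    keyRel x a b ∨ keyRel x b a := by
  unfold keyRel
  rcases lt_trichotomy (x a) (x b) with h | h | h
  · exact Or.inl (Or.inl h)
  · rcases le_total a b with h' | h'
    · exact Or.inl (Or.inr ⟨h, h'⟩)
    · exact Or.inr (Or.inr ⟨h.symm, h'⟩)
  · exact Or.inr (Or.inl h)

lemma keyRel_antisymm {n : ℕ} (x : Fin n → ℝ) {a b : Fin n}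
    (h1 : keyRel x a b) (h2 : keyRel x b a) : a = b := by
  rcases h1 with h1 | ⟨h1, h1'⟩ <;> rcases h2 with h2 | ⟨h2, h2'⟩
  · exact absurd (h1.trans h2) (lt_irrefl _)
  · exact absurd (h2 ▸ h1) (lt_irrefl _)
  · exact absurd (h1 ▸ h2) (lt_irrefl _)
  · exact le_antisymm h1' h2'

instance keyRelTotal {n : ℕ} (x : Fin n → ℝ) : IsTotal (Fin n) (keyRel x) :=
  ⟨keyRel_total' x⟩

instance keyRelTrans {n : ℕ} (x : Fin n → ℝ) : IsTrans (Fin n) (keyRel x) :=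
  ⟨fun _ _ _ => keyRel_trans' x⟩

lemma mem_before {n : ℕ} {S : Finset (Fin n)} {x : Fin n → ℝ} {i j : Fin n} :
    j ∈ before S x i ↔ j ∈ S ∧ keyRel x j i ∧ j ≠ i := by
  classical
  unfold before keyRel
  rw [Finset.mem_filter]
  constructor
  · rintro ⟨hS, h | ⟨h, h'⟩⟩
    · exact ⟨hS, Or.inl h, fun e => absurd (e ▸ h) (lt_irrefl _)⟩
    · exact ⟨hS, Or.inr ⟨h, le_of_lt h'⟩, ne_of_lt h'⟩
  · rintro ⟨hS, h | ⟨h, h'⟩, hne⟩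
    · exact ⟨hS, Or.inl h⟩
    · exact ⟨hS, Or.inr ⟨h, lt_of_le_of_ne h' hne⟩⟩

lemma obsDeg_mono {n : ℕ} (E : Finset (Fin n × Fin n)) (S : Finset (Fin n))
    {T T' : Finset (Fin n)} (h : T ⊆ T') (i : Fin n) :
    obsDeg E S T i ≤ obsDeg E S T' i := by
  apply Finset.card_le_card
  intro e he
  simp only [Finset.mem_filter] at *
  exact ⟨he.1, he.2.1, he.2.2.imp id fun h' => h h'⟩

lemma obsDeg_insert_le {n : ℕ} (E : Finset (Fin n × Fin n)) (S : Finset (Fin n))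
    (a : Fin n) (T : Finset (Fin n)) (i : Fin n) :
    obsDeg E S (insert a T) i ≤ obsDeg E S T i + 1 := by
  unfold obsDeg
  have hsub : E.filter (fun e => e.2 = i ∧ (e.1 ∉ S ∨ e.1 ∈ insert a T)) ⊆
      insert (a, i) (E.filter (fun e => e.2 = i ∧ (e.1 ∉ S ∨ e.1 ∈ T))) := by
    intro e he
    simp only [Finset.mem_filter, Finset.mem_insert] at *
    obtain ⟨heE, h2, h3⟩ := he
    rcases h3 with h | h
    · exact Or.inr ⟨heE, h2, Or.inl h⟩
    · rcases h with h | h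
      · exact Or.inl (Prod.ext h h2)
      · exact Or.inr ⟨heE, h2, Or.inr h⟩
  calc _ ≤ (insert ((a : Fin n), i) (E.filter (fun e => e.2 = i ∧ (e.1 ∉ S ∨ e.1 ∈ T)))).card :=
        Finset.card_le_card hsub
    _ ≤ _ + 1 := Finset.card_insert_le _ _

lemma pmFold_spec {n : ℕ} (E : Finset (Fin n × Fin n)) (S : Finset (Fin n)) (x : Fin n → ℝ) :
    ∀ (rest : List (Fin n)) (c : Fin n) (d : ℕ) (seen : Finset (Fin n)),
    seen ∪ rest.toFinset = S →
    rest.Nodup →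
    (∀ i ∈ rest, i ∉ seen) →
    rest.Pairwise (keyRel x) →
    (∀ s ∈ seen, ∀ i ∈ rest, keyRel x s i) →
    c ∈ seen →
    d = obsDeg E S (before S x c) c →
    (∀ j ∈ seen, obsDeg E S (before S x j) j ≤ d) →
    (pmFold E S rest (c, d, seen)).1 ∈ S ∧
    ∀ j ∈ S, obsDeg E S (before S x j) j ≤
      obsDeg E S (before S x (pmFold E S rest (c, d, seen)).1)
        (pmFold E S rest (c, d, seen)).1 := by
  intro rest
  induction rest with
  | nil =>
    intro c d seen hunion _ _ _ _ hc hd hinv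
    simp only [List.toFinset_nil, Finset.union_empty] at hunion
    subst hunion
    refine ⟨hc, fun j hj => ?_⟩
    simp only [pmFold]
    exact (hinv j hj).trans_eq hd
  | cons i rest ih =>
    intro c d seen hunion hnd hdisj hpw hord hc hd hinv
    have hiS : i ∈ S := by
      rw [← hunion]; simp
    have hbefore : before S x i = seen := by
      ext j
      rw [mem_before]
      constructor
      · rintro ⟨hjS, hkey, hne⟩
        rw [← hunion, Finset.mem_union, List.mem_toFinset, List.mem_cons] at hjS
        rcases hjS with hjseen | rfl | hjrest
        · exact hjseen
        · exact absurd rfl hne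
        · exact absurd (keyRel_antisymm x (List.rel_of_pairwise_cons hpw hjrest) hkey)
            (Ne.symm hne)
      · intro hjseen
        refine ⟨by rw [← hunion]; exact Finset.mem_union_left _ hjseen,
          hord j hjseen i List.mem_cons_self, fun e => hdisj i List.mem_cons_self (e ▸ hjseen)⟩
    have hunion' : insert i seen ∪ rest.toFinset = S := by
      rw [← hunion]
      simp only [List.toFinset_cons]
      rw [Finset.insert_union, Finset.union_insert]
    have hnd' : rest.Nodup := hnd.of_cons
    have hinotrest : i ∉ rest := (List.nodup_cons.mp hnd).1
    have hdisj' : ∀ k ∈ rest, k ∉ insert i seen := by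
      intro k hk
      rw [Finset.mem_insert]
      rintro (rfl | hks)
      · exact hinotrest hk
      · exact hdisj k (List.mem_cons_of_mem _ hk) hks
    have hpw' : rest.Pairwise (keyRel x) := hpw.of_cons
    have hord' : ∀ s ∈ insert i seen, ∀ k ∈ rest, keyRel x s k := by
      intro s hs k hk
      rcases Finset.mem_insert.mp hs with rfl | hs
      · exact List.rel_of_pairwise_cons hpw hk
      · exact hord s hs k (List.mem_cons_of_mem _ hk)
    simp only [pmFold]
    by_cases hcond : d ≤ obsDeg E S (seen.erase c) i
    · rw [if_pos hcond]
      apply ih i (obsDeg E S seen i) (insert i seen) hunion' hnd' hdisj' hpw' hord'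
        (Finset.mem_insert_self _ _) (by rw [hbefore])
      intro j hj
      rcases Finset.mem_insert.mp hj with rfl | hj
      · rw [hbefore]
      · calc obsDeg E S (before S x j) j ≤ d := hinv j hj
          _ ≤ obsDeg E S (seen.erase c) i := hcond
          _ ≤ obsDeg E S seen i := obsDeg_mono E S (Finset.erase_subset _ _) i
    · rw [if_neg hcond]
      apply ih c d (insert i seen) hunion' hnd' hdisj' hpw' hord'
        (Finset.mem_insert_of_mem hc) hd
      intro j hj
      rcases Finset.mem_insert.mp hj with rfl | hj
      · rw [hbefore]
        calc obsDeg E S seen j = obsDeg E S (insert c (seen.erase c)) j := by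
              rw [Finset.insert_erase hc]
          _ ≤ obsDeg E S (seen.erase c) j + 1 := obsDeg_insert_le E S c _ j
          _ ≤ d := Nat.succ_le_of_lt (Nat.lt_of_not_le hcond)
      · exact hinv j hj


theorem permutation_mechanism_max (n : ℕ) (E : Finset (Fin n × Fin n)) (hE : NoLoops E)
    (S : Finset (Fin n)) (hS : S.Nonempty) (x : Fin n → ℝ)
    (hx : ∀ i ∈ S, 0 ≤ x i ∧ x i ≤ 1) :
    ∃ iPm : Fin n, pmOut E S x = some iPm ∧ iPm ∈ S ∧
      ∀ i ∈ S, obsDeg E S (before S x i) i ≤ obsDeg E S (before S x iPm) iPm := by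
  classical
  have hperm : (permList S x).Perm S.toList := List.perm_insertionSort _ _
  have hnd : (permList S x).Nodup := hperm.nodup_iff.mpr S.nodup_toList
  have hsort : (permList S x).Pairwise (keyRel x) :=
    List.pairwise_insertionSort (keyRel x) S.toList
  have hmem : ∀ j, j ∈ permList S x ↔ j ∈ S := fun j => by
    rw [hperm.mem_iff, Finset.mem_toList]
  cases hL : permList S x with
  | nil =>
    exfalso
    obtain ⟨a, ha⟩ := hS
    rw [← hmem a, hL] at ha
    exact List.not_mem_nil ha
  | cons i rest =>
    rw [hL] at hnd hsort hmem
    have hndrest : rest.Nodup := hnd.of_cons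
    have hinotrest : i ∉ rest := (List.nodup_cons.mp hnd).1
    have hunion : ({i} : Finset (Fin n)) ∪ rest.toFinset = S := by
      ext j
      rw [Finset.mem_union, Finset.mem_singleton, List.mem_toFinset, ← hmem j,
        List.mem_cons]
    have hbefore : before S x i = ∅ := by
      ext j
      simp only [Finset.notMem_empty, iff_false]
      rw [mem_before]
      rintro ⟨hjS, hkey, hne⟩
      rw [← hmem j, List.mem_cons] at hjS
      rcases hjS with rfl | hjr
      · exact hne rfl
      · exact hne.symm (keyRel_antisymm x (List.rel_of_pairwise_cons hsort hjr) hkey)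
    have hspec := pmFold_spec E S x rest i (obsDeg E S ∅ i) {i} hunion hndrest
      (fun k hk hks => hinotrest (Finset.mem_singleton.mp hks ▸ hk))
      hsort.of_cons
      (fun s hs k hk => by
        rw [Finset.mem_singleton] at hs
        exact hs ▸ List.rel_of_pairwise_cons hsort hk)
      (Finset.mem_singleton_self i)
      (by rw [hbefore])
      (fun j hj => by rw [Finset.mem_singleton] at hj; subst hj; rw [hbefore])
    refine ⟨(pmFold E S rest (i, obsDeg E S ∅ i, {i})).1, ?_, hspec.1, hspec.2⟩
    unfold pmOut
    rw [hL]
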